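/- arXiv:2002.08692 — 5 statements merged into one kernel-verified Lean document; each statement's English description precedes it below -/
import Mathlib

section
/- Let D̂ and Ĝ be abelian groups (written multiplicatively) in which every element g satisfies g*g = 1. Let m be a natural number and let χ : Fin (m+1) → D̂ be injective. Let F be a finite type, let d ≥ 2 be a natural number, and for each p ∈ F let w p be a multiset of elements of Ĝ of cardinality d. For j ∈ Fin (m+1) and p ∈ F define the multiset t (j,p) over D̂ × Ĝ as the sum of three multisets: (i) the multiset of pairs (χ k * χ j, 1) as k ranges over Fin (m+1) with k ≠ j; (ii) the image of w p under y ↦ (1, y); (iii) the image of w p under y ↦ (χ j, y). Then every element of Multiset (D̂ × Ĝ) occurs with even multiplicity in the family of multisets t (j,p), indexed by (j,p) ∈ Fin (m+1) × F, if and only if every element of Multiset Ĝ occurs with even multiplicity in the family of multisets w p, indexed by p ∈ F. -/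
/-- Representation-ring form of the main theorem (Theorem 1.1): with `χ j` the
characters of the lines `E_j` (pairwise distinct) and `w p` the character multiset
of the isotropy representation `T_p X_ℝ`, the family of character multisets
`t (j,p)` of `T_{[e_j,p]} P(m,X) ≅ T_{[e_j]}ℝP^m ⊕ T_p X_ℝ ⊕ (E_j ⊗ T_p X_ℝ)` has
every value occurring with even multiplicity iff the family `w p` does. -/
theorem dold_equivariant_cobordism_vanishing_iff
    {Dhat Ghat : Type*} [CommGroup Dhat] [CommGroup Ghat]
    [DecidableEq Dhat] [DecidableEq Ghat]
    (hD : ∀ g : Dhat, g * g = 1) (hG : ∀ g : Ghat, g * g = 1)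
    (m : ℕ) (χ : Fin (m + 1) → Dhat) (hχ : Function.Injective χ)
    (F : Type*) [Fintype F] [DecidableEq F]
    (d : ℕ) (hd : 2 ≤ d)
    (w : F → Multiset Ghat) (hw : ∀ p, Multiset.card (w p) = d)
    (t : Fin (m + 1) × F → Multiset (Dhat × Ghat))
    (ht : ∀ j p, t (j, p) =
        ((Finset.univ.filter (fun k : Fin (m + 1) => k ≠ j)).val.map
          (fun k => (χ k * χ j, (1 : Ghat))))
        + (w p).map (fun y => ((1 : Dhat), y))
        + (w p).map (fun y => (χ j, y))) :
    (∀ M : Multiset (Dhat × Ghat),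
        Even ((Finset.univ.filter (fun jp : Fin (m + 1) × F => t jp = M)).card))
    ↔ (∀ M : Multiset Ghat,
        Even ((Finset.univ.filter (fun p : F => w p = M)).card)) := by
  classical
  -- count of a in fst-image of the A part is at most 1
  have hA_le : ∀ (a : Dhat) (j : Fin (m + 1)),
      Multiset.count a (Multiset.map (fun k => χ k * χ j)
        ((Finset.univ.filter (fun k : Fin (m + 1) => k ≠ j)).val)) ≤ 1 := by
    intro a j
    rw [Multiset.count_map, ← Finset.filter_val]
    show (Finset.filter _ _).card ≤ 1
    apply Finset.card_le_one.2
    intro k1 h1 k2 h2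
    simp only [Finset.mem_filter] at h1 h2
    exact hχ (mul_right_cancel (h1.2.symm.trans h2.2))
  -- count of a pair in the image multisets
  have hBC : ∀ (c : Dhat) (v : Multiset Ghat) (x : Dhat × Ghat),
      Multiset.count x (v.map (fun y => (c, y)))
        = if x.1 = c then Multiset.count x.2 v else 0 := by
    intro c v ⟨a, b⟩
    by_cases hac : a = c
    · subst hac
      simp only [if_pos rfl]
      exact Multiset.count_map_eq_count' (fun y => (a, y)) v
        (fun y1 y2 h => congrArg Prod.snd h) b
    · rw [if_neg hac, Multiset.count_eq_zero]
      intro hmem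
      obtain ⟨y, -, hy⟩ := Multiset.mem_map.1 hmem
      exact hac (congrArg Prod.fst hy.symm)
  -- count of a in the fst-image of the image multisets
  have hBCfst : ∀ (a c : Dhat) (v : Multiset Ghat),
      Multiset.count a (Multiset.map Prod.fst (v.map (fun y => (c, y))))
        = if a = c then Multiset.card v else 0 := by
    intro a c v
    rw [Multiset.map_map]
    have : (Prod.fst ∘ fun y => (c, y)) = Function.const Ghat c := rfl
    rw [this, Multiset.map_const, Multiset.count_replicate]
    by_cases h : a = c
    · simp [h]
    · simp [h, Ne.symm h]
  -- key injectivity: t (j,p) determines j and w p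
  have key : ∀ j p j' p', t (j, p) = t (j', p') → j = j' ∧ w p = w p' := by
    intro j p j' p' h
    rw [ht j p, ht j' p'] at h
    have hj : j = j' := by
      by_contra hne
      have h1 := congrArg (fun s => Multiset.count (χ j') (Multiset.map Prod.fst s)) h
      simp only [Multiset.map_add, Multiset.count_add, Multiset.map_map] at h1
      rw [show ((Prod.fst ∘ fun k => (χ k * χ j, (1 : Ghat))) = fun k => χ k * χ j) from rfl,
          show ((Prod.fst ∘ fun k => (χ k * χ j', (1 : Ghat))) = fun k => χ k * χ j') from rfl]
        at h1
      have e1 := hA_le (χ j') j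
      have e2 := hA_le (χ j') j'
      have hB : ∀ (c : Dhat) (v : Multiset Ghat),
          Multiset.count (χ j') (Multiset.map (Prod.fst ∘ fun y : Ghat => (c, y)) v)
            = if χ j' = c then Multiset.card v else 0 := by
        intro c v
        have : (Prod.fst ∘ fun y : Ghat => (c, y)) = Function.const Ghat c := rfl
        rw [this, Multiset.map_const, Multiset.count_replicate]
        by_cases h : χ j' = c
        · simp [h]
        · simp [h, Ne.symm h]
      simp only [hB, hw] at h1
      rw [if_neg (fun e : χ j' = χ j => hne (hχ e.symm))] at h1
      simp only [if_true] at h1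
      by_cases h1' : χ j' = 1
      · rw [if_pos h1'] at h1; omega
      · rw [if_neg h1'] at h1; omega
    subst hj
    refine ⟨rfl, Multiset.ext.2 fun y => ?_⟩
    rw [add_assoc, add_assoc] at h
    have h2 := add_left_cancel h
    have h3 := congrArg (Multiset.count ((1 : Dhat), y)) h2
    simp only [Multiset.count_add, hBC] at h3
    simp only [if_true] at h3
    split_ifs at h3 <;> omega
  -- cardinality bijection
  have hcard : ∀ (j0 : Fin (m + 1)) (p0 : F),
      (Finset.univ.filter (fun jp : Fin (m + 1) × F => t jp = t (j0, p0))).card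
        = (Finset.univ.filter (fun p : F => w p = w p0)).card := by
    intro j0 p0
    refine Finset.card_bij' (fun jp _ => jp.2) (fun p _ => (j0, p)) ?_ ?_ ?_ ?_
    · intro jp hjp
      simp only [Finset.mem_filter, Finset.mem_univ, true_and] at hjp ⊢
      exact (key jp.1 jp.2 j0 p0 hjp).2
    · intro p hp
      simp only [Finset.mem_filter, Finset.mem_univ, true_and] at hp ⊢
      rw [ht, ht, hp]
    · intro jp hjp
      simp only [Finset.mem_filter, Finset.mem_univ, true_and] at hjp
      have h1 := (key jp.1 jp.2 j0 p0 hjp).1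
      exact Prod.ext h1.symm rfl
    · intro p hp
      rfl
  constructor
  · intro H M
    by_cases hM : ∃ p0, w p0 = M
    · obtain ⟨p0, rfl⟩ := hM
      have := H (t (0, p0))
      rwa [hcard 0 p0] at this
    · have : (Finset.univ.filter (fun p : F => w p = M)) = ∅ := by
        rw [Finset.filter_eq_empty_iff]
        exact fun {p} _ hp => hM ⟨p, hp⟩
      simp [this]
  · intro H M
    by_cases hM : ∃ jp0 : Fin (m + 1) × F, t jp0 = M
    · obtain ⟨⟨j0, p0⟩, rfl⟩ := hM
      rw [hcard j0 p0]
      exact H (w p0)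
    · have : (Finset.univ.filter (fun jp : Fin (m + 1) × F => t jp = M)) = ∅ := by
        rw [Finset.filter_eq_empty_iff]
        exact fun {jp} _ hjp => hM ⟨jp, hjp⟩
      simp [this]
end

section
/- Let A be an abelian group (written multiplicatively), let m and n be natural numbers with n ≥ 2, and let χ : Fin (m+1) → A be injective. Let i, j ∈ Fin (m+1). If the multiset obtained as the sum of (the image of the universal multiset of Fin (m+1) under k ↦ χ k * χ i) and (n copies of χ i) equals the multiset obtained as the sum of (the image of the universal multiset of Fin (m+1) under k ↦ χ k * χ j) and (n copies of χ j), then i = j. -/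
/-- Cancellation step: for pairwise distinct characters `χ k` of an abelian group,
if the multiset `{χ k * χ i : k} + n·{χ i}` equals `{χ k * χ j : k} + n·{χ j}` with
`n ≥ 2`, then `i = j`. -/
theorem eq_of_multiset_tensor_eq {A : Type*} [CommGroup A] (m n : ℕ) (hn : 2 ≤ n)
    (χ : Fin (m + 1) → A) (hχ : Function.Injective χ) (i j : Fin (m + 1))
    (h : (Finset.univ : Finset (Fin (m + 1))).val.map (fun k => χ k * χ i)
          + Multiset.replicate n (χ i)
        = (Finset.univ : Finset (Fin (m + 1))).val.map (fun k => χ k * χ j)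
          + Multiset.replicate n (χ j)) :
    i = j := by
  classical
  by_contra hij
  have hne : χ j ≠ χ i := fun hh => hij (hχ hh.symm)
  have hcount := congrArg (Multiset.count (χ j)) h
  rw [Multiset.count_add, Multiset.count_add, Multiset.count_replicate,
    Multiset.count_replicate, if_neg (fun hh => hij (hχ hh)), if_pos rfl] at hcount
  have hnodup : ((Finset.univ : Finset (Fin (m + 1))).val.map
      (fun k => χ k * χ i)).Nodup :=
    Multiset.Nodup.map (fun a b hab => hχ (mul_right_cancel hab)) Finset.univ.nodup
  have h1 : Multiset.count (χ j)
      ((Finset.univ : Finset (Fin (m + 1))).val.map (fun k => χ k * χ i)) ≤ 1 :=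
    Multiset.nodup_iff_count_le_one.mp hnodup _
  omega
end

section
/- Let m ≥ 1 and let D be a set of functions d : Fin (m+1) → ℝ such that d k ∈ {1, -1} for all k and all d ∈ D; let D act on ℝ^{m+1} = (Fin (m+1) → ℝ) by coordinatewise multiplication. Suppose there exist indices i ≠ j in Fin (m+1) such that d i = d j for every d ∈ D. Then the set of points of the real projective space ℙ(ℝ^{m+1}) (the projectivization of Fin (m+1) → ℝ) that are fixed by the action of every d ∈ D is infinite. -/
/-- If a set `D` of sign-change maps on `ℝ^{m+1}` has two coordinates `i ≠ j` on
which every `d ∈ D` agrees, then the set of points of `ℝP^m` fixed by every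
`d ∈ D` (coordinatewise multiplication sends a representative to a scalar
multiple of itself) is infinite. -/
theorem infinite_fixed_points_of_equal_coordinates (m : ℕ) (hm : 1 ≤ m)
    (D : Set (Fin (m + 1) → ℝ)) (hD : ∀ d ∈ D, ∀ k, d k = 1 ∨ d k = -1)
    (i j : Fin (m + 1)) (hij : i ≠ j) (hEq : ∀ d ∈ D, d i = d j) :
    {x : Projectivization ℝ (Fin (m + 1) → ℝ) |
      ∀ d ∈ D, ∃ c : ℝ, (fun k => d k * x.rep k) = c • x.rep}.Infinite := by
  set v : ℝ → (Fin (m + 1) → ℝ) :=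
    fun b => Pi.single i (1:ℝ) + Pi.single j b with hv
  have hvi : ∀ b, v b i = 1 := by
    intro b; simp [hv, Pi.single_apply, hij, hij.symm]
  have hvj : ∀ b, v b j = b := by
    intro b; simp [hv, Pi.single_apply, hij, hij.symm]
  have hvk : ∀ b k, k ≠ i → k ≠ j → v b k = 0 := by
    intro b k hki hkj
    simp [hv, Pi.single_apply, Ne.symm hki, Ne.symm hkj]
  have hvne : ∀ b, v b ≠ 0 := by
    intro b h
    have := congrFun h i
    rw [hvi] at this
    simpa using this
  set f : ℝ → Projectivization ℝ (Fin (m + 1) → ℝ) :=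
    fun b => Projectivization.mk ℝ (v b) (hvne b) with hf
  refine Set.infinite_of_injective_forall_mem (f := f) ?_ ?_
  · intro b b' hbb'
    rw [hf] at hbb'
    rw [Projectivization.mk_eq_mk_iff] at hbb'
    obtain ⟨a, ha⟩ := hbb'
    have hai := congrFun ha i
    have haj := congrFun ha j
    simp only [Pi.smul_apply, hvi, hvj, Units.smul_def, smul_eq_mul] at hai haj
    rw [mul_one] at hai
    rw [hai, one_mul] at haj
    exact haj.symm
  · intro b
    simp only [Set.mem_setOf_eq]
    intro d hd
    have hrep : Projectivization.mk ℝ ((f b).rep) (f b).rep_nonzero = f b :=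
      Projectivization.mk_rep (f b)
    rw [hf, Projectivization.mk_eq_mk_iff] at hrep
    obtain ⟨a, ha⟩ := hrep
    refine ⟨d i, funext fun k => ?_⟩
    have hk := congrFun ha k
    simp only [Pi.smul_apply, Units.smul_def, smul_eq_mul] at hk
    by_cases hki : k = i
    · subst hki; rfl
    by_cases hkj : k = j
    · subst hkj
      simp only [Pi.smul_apply, smul_eq_mul]
      rw [hEq d hd]
    · have h0 : (f b).rep k = 0 := by
        rw [← hk, hvk b k hki hkj, mul_zero]
      simp [h0]
end

section
/- Let K be a field, G a group, V a finite-dimensional K-vector space of dimension n, and ρ : G → GL(V) a representation such that V is the internal direct sum of n one-dimensional subspaces L_1,…,L_n on which G acts by pairwise distinct characters χ_1,…,χ_n : G → K (i.e., ρ(g)v = χ_k(g) • v for v ∈ L_k). Let r ≥ 1 and n_1,…,n_r be positive integers with n_1 + ⋯ + n_r = n. Then the set of r-tuples (W_1,…,W_r) of G-invariant subspaces of V that form an internal direct sum decomposition of V with dim W_i = n_i for each i is finite, of cardinality equal to the multinomial coefficient n!/(n_1!⋯n_r!). -/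
/-!
Distinct characters separate the weight components of a vector, so a `G`-invariant subspace
contains every weight component of each of its vectors; hence the invariant subspaces are exactly
the spans of subsets of a weight basis. An invariant decomposition with dimensions `nf` is then
the same thing as a map from the weight basis to `Fin r` with fibre sizes `nf`, and such maps form
a single orbit of the permutations of the basis, with stabiliser `∏ i, Perm (fibre i)`.
-/

open Equiv Finset Module Submodule

section FiberCount

variable {α ι : Type*}

theorem exists_perm_comp_eq_of_ncard_preimage_eq [Finite α] {f f' : α → ι}
    (h : ∀ i, (f ⁻¹' {i}).ncard = (f' ⁻¹' {i}).ncard) : ∃ σ : Perm α, f ∘ σ = f' := by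
  have e : ∀ i, {a // f' a = i} ≃ {a // f a = i} := fun i =>
    Classical.choice (Finite.card_eq.mp (h i).symm)
  refine ⟨(sigmaFiberEquiv f').symm.trans ((sigmaCongrRight e).trans (sigmaFiberEquiv f)), ?_⟩
  funext a
  exact (e (f' a) ⟨a, rfl⟩).2

theorem exists_ncard_preimage_eq [Fintype α] [Fintype ι] (m : ι → ℕ)
    (hm : ∑ i, m i = Fintype.card α) : ∃ f : α → ι, ∀ i, (f ⁻¹' {i}).ncard = m i := by
  let e : α ≃ Σ i, Fin (m i) := Fintype.equivOfCardEq (by simp [hm])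
  refine ⟨Sigma.fst ∘ e, fun i => ?_⟩
  have hfib : Sigma.fst ⁻¹' {i} = Set.range (Sigma.mk (β := fun i => Fin (m i)) i) := by
    ext ⟨j, x⟩
    simp [eq_comm]
  rw [Set.preimage_comp, Set.ncard_preimage_of_injective_subset_range e.injective (by simp),
    hfib, Set.ncard_range_of_injective sigma_mk_injective, Nat.card_eq_fintype_card,
    Fintype.card_fin]

theorem ncard_preimage_comp_perm (f : α → ι) (σ : Perm α) (i : ι) :
    ((f ∘ σ) ⁻¹' {i}).ncard = (f ⁻¹' {i}).ncard := by
  rw [Set.preimage_comp, Set.ncard_preimage_of_injective_subset_range σ.injective (by simp)]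

theorem ncard_setOf_ncard_preimage_eq [Fintype α] [Fintype ι] (m : ι → ℕ)
    (hm : ∑ i, m i = Fintype.card α) :
    {f : α → ι | ∀ i, (f ⁻¹' {i}).ncard = m i}.ncard = Nat.multinomial univ m := by
  obtain ⟨f₀, hf₀⟩ := exists_ncard_preimage_eq m hm
  have horbit : {f : α → ι | ∀ i, (f ⁻¹' {i}).ncard = m i} =
      MulAction.orbit (Perm α)ᵈᵐᵃ f₀ := by
    ext f
    constructor
    · intro hf
      obtain ⟨σ, hσ⟩ := exists_perm_comp_eq_of_ncard_preimage_eq fun i => (hf₀ i).trans (hf i).symm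
      exact ⟨DomMulAct.mk σ, hσ⟩
    · rintro ⟨c, rfl⟩ i
      exact (ncard_preimage_comp_perm f₀ (DomMulAct.mk.symm c) i).trans (hf₀ i)
  have hstab : Nat.card (MulAction.stabilizer (Perm α)ᵈᵐᵃ f₀) = ∏ i, (m i).factorial := by
    rw [Nat.card_congr (subtypeEquiv (q := fun g : Perm α => f₀ ∘ g = f₀) DomMulAct.mk.symm
      fun _ => DomMulAct.mem_stabilizer_iff)]
    refine (Nat.card_coe_set_eq {g : Perm α | f₀ ∘ g = f₀}).trans ?_
    rw [DomMulAct.stabilizer_ncard]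
    exact Finset.prod_congr rfl fun i _ => congrArg Nat.factorial (hf₀ i)
  apply Nat.eq_of_mul_eq_mul_left (Finset.prod_pos fun i _ => (m i).factorial_pos)
  rw [Nat.multinomial_spec, hm, ← hstab, horbit, ← MulAction.index_stabilizer,
    Subgroup.card_mul_index, Nat.card_congr DomMulAct.mk.symm, Nat.card_perm,
    Nat.card_eq_fintype_card]

end FiberCount

theorem DirectSum.IsInternal.exists_basis_mem_of_finrank_eq_one {ι K V : Type*} [DecidableEq ι]
    [Field K] [AddCommGroup V] [Module K V] {L : ι → Submodule K V} (h : DirectSum.IsInternal L)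
    (hL : ∀ k, finrank K (L k) = 1) : ∃ b : Basis ι K V, ∀ k, b k ∈ L k := by
  refine ⟨(h.collectedBasis fun k => basisUnique Unit (hL k)).reindex
    (Equiv.sigmaUnique ι fun _ => Unit), fun k => ?_⟩
  rw [Basis.reindex_apply, Equiv.sigmaUnique_symm_apply]
  exact h.collectedBasis_mem (fun k => basisUnique Unit (hL k)) ⟨k, ()⟩

namespace Module.Basis

variable {ι κ K V : Type*} [Field K] [AddCommGroup V] [Module K V] (b : Basis ι K V)

theorem finrank_span_image [Finite ι] (s : Set ι) : finrank K (span K (b '' s)) = s.ncard := by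
  classical
  have := Fintype.ofFinite ι
  rw [finrank_span_set_eq_card ((b.linearIndependent.linearIndepOn s).id_image), Set.toFinset_card,
    Fintype.card_eq_nat_card, Nat.card_coe_set_eq, Set.ncard_image_of_injective s b.injective]

theorem isInternal_span_image_preimage [DecidableEq κ] (f : ι → κ) :
    DirectSum.IsInternal fun i => span K (b '' (f ⁻¹' {i})) := by
  have hsup (t : Set κ) : ⨆ i ∈ t, span K (b '' (f ⁻¹' {i})) = span K (b '' (f ⁻¹' t)) := by
    simp only [← span_iUnion, ← Set.image_iUnion, ← Set.preimage_iUnion, Set.biUnion_of_singleton]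
  rw [DirectSum.isInternal_submodule_iff_iSupIndep_and_iSup_eq_top, iSupIndep_def]
  refine ⟨fun i => ?_, ?_⟩
  · have hcompl := hsup {i}ᶜ
    simp only [Set.mem_compl_iff, Set.mem_singleton_iff] at hcompl
    rw [hcompl]
    have hdisj : Disjoint ({i} : Set κ) {i}ᶜ := disjoint_compl_right
    exact b.linearIndependent.disjoint_span_image (hdisj.preimage f)
  · simpa using hsup Set.univ

theorem exists_eq_preimage_of_isInternal_span_image [DecidableEq κ] {s : κ → Set ι}
    (h : DirectSum.IsInternal fun i => span K (b '' s i)) : ∃ f : ι → κ, ∀ i, s i = f ⁻¹' {i} := by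
  obtain ⟨hind, htop⟩ := (DirectSum.isInternal_submodule_iff_iSupIndep_and_iSup_eq_top _).mp h
  have hcover (k : ι) : ∃ i, k ∈ s i := by
    have hk : b k ∈ span K (b '' ⋃ i, s i) := by
      rw [Set.image_iUnion, span_iUnion, htop]; trivial
    simpa using hk
  have hunique {k : ι} {i j : κ} (hi : k ∈ s i) (hj : k ∈ s j) : i = j := by
    by_contra hij
    exact b.ne_zero k <| disjoint_def.mp (hind.pairwiseDisjoint hij) _
      (subset_span ⟨k, hi, rfl⟩) (subset_span ⟨k, hj, rfl⟩)
  choose f hf using hcover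
  exact ⟨f, fun i => Set.ext fun k => ⟨fun hk => hunique (hf k) hk, fun hk => hk ▸ hf k⟩⟩

theorem injective_span_image_preimage :
    Function.Injective fun (f : ι → κ) i => span K (b '' (f ⁻¹' {i})) := by
  intro f f' h
  funext k
  simp only at h
  have hk : b k ∈ span K (b '' (f' ⁻¹' {f k})) := by
    rw [← congrFun h (f k)]
    exact subset_span ⟨k, rfl, rfl⟩
  exact (b.self_mem_span_image.mp hk).symm

end Module.Basis

namespace Representation

variable {ι K G V : Type*} [Field K] [Monoid G] [AddCommGroup V] [Module K V]
  (ρ : Representation K G V) {χ : ι → G → K}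

/-- Subtracting `χ a g` times the sum from its image under `ρ g` removes the `a`-component and
rescales the others by `χ k g - χ a g`, which is nonzero for a suitable `g`. -/
theorem forall_mem_of_sum_mem_invtSubmodule {W : Submodule K V} (hW : W ∈ ρ.invtSubmodule)
    {s : Finset ι} (hχ : Set.InjOn χ s) {v : ι → V} (hv : ∀ k g, ρ g (v k) = χ k g • v k)
    (hs : ∑ k ∈ s, v k ∈ W) : ∀ k ∈ s, v k ∈ W := by
  classical
  induction s using Finset.induction_on generalizing v with
  | empty => simp
  | insert a s ha ih =>
    have hχs : Set.InjOn χ s := hχ.mono (by simp)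
    rw [Finset.sum_insert ha] at hs
    have hrest : ∀ k ∈ s, v k ∈ W := by
      intro k hk
      have hne : χ k ≠ χ a := fun h =>
        ha (hχ (Finset.mem_insert_of_mem hk) (Finset.mem_insert_self a s) h ▸ hk)
      obtain ⟨g, hg⟩ := Function.ne_iff.mp hne
      have hw : ∀ k g', ρ g' ((χ k g - χ a g) • v k) = χ k g' • (χ k g - χ a g) • v k := by
        intro k g'
        rw [map_smul, hv, smul_comm]
      have hsum : ∑ k ∈ s, (χ k g - χ a g) • v k ∈ W := by
        have : ∑ k ∈ s, (χ k g - χ a g) • v k =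
            ρ g (v a + ∑ k ∈ s, v k) - χ a g • (v a + ∑ k ∈ s, v k) := by
          simp only [map_add, map_sum, hv, Finset.smul_sum, sub_smul, smul_add,
            Finset.sum_sub_distrib]
          abel
        rw [this]
        exact W.sub_mem ((ρ.mem_invtSubmodule.mp hW g) hs) (W.smul_mem _ hs)
      exact (W.smul_mem_iff (sub_ne_zero.mpr hg)).mp (ih hχs hw hsum k hk)
    intro k hk
    rcases Finset.mem_insert.mp hk with rfl | hk
    · simpa using W.sub_mem hs (W.sum_mem hrest)
    · exact hrest k hk

variable {ρ} {b : Basis ι K V}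

theorem span_image_mem_invtSubmodule (hb : ∀ k g, ρ g (b k) = χ k g • b k) (s : Set ι) :
    span K (b '' s) ∈ ρ.invtSubmodule := by
  refine ρ.mem_invtSubmodule.mpr fun g => ?_
  rw [Module.End.mem_invtSubmodule, span_le]
  rintro _ ⟨k, hk, rfl⟩
  rw [SetLike.mem_coe, mem_comap, hb]
  exact smul_mem _ _ (subset_span ⟨k, hk, rfl⟩)

theorem eq_span_image_of_mem_invtSubmodule (hb : ∀ k g, ρ g (b k) = χ k g • b k)
    (hχ : Function.Injective χ) {W : Submodule K V} (hW : W ∈ ρ.invtSubmodule) :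
    W = span K (b '' {k | b k ∈ W}) := by
  refine le_antisymm (fun w hw => ?_) (span_le.mpr (Set.image_subset_iff.mpr fun _ hk => hk))
  rw [b.mem_span_image]
  intro k hk
  have hsum : ∑ k ∈ (b.repr w).support, b.repr w k • b k = w := by
    conv_rhs => rw [← b.linearCombination_repr w, Finsupp.linearCombination_apply]
    rfl
  have hcomp := ρ.forall_mem_of_sum_mem_invtSubmodule hW hχ.injOn
    (v := fun k => b.repr w k • b k) (fun k g => by rw [map_smul, hb, smul_comm])
    (by rwa [hsum]) k hk
  exact (W.smul_mem_iff (Finsupp.mem_support_iff.mp hk)).mp hcomp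

theorem setOf_isInternal_invtSubmodule_eq_image [Finite ι] {κ : Type*} [DecidableEq κ]
    (hb : ∀ k g, ρ g (b k) = χ k g • b k) (hχ : Function.Injective χ) (m : κ → ℕ) :
    {W : κ → Submodule K V | (∀ i, W i ∈ ρ.invtSubmodule) ∧ DirectSum.IsInternal W ∧
        ∀ i, finrank K (W i) = m i} =
      (fun f i => span K (b '' (f ⁻¹' {i}))) '' {f : ι → κ | ∀ i, (f ⁻¹' {i}).ncard = m i} := by
  ext W
  constructor
  · rintro ⟨hinv, hint, hdim⟩
    have hW (i : κ) := eq_span_image_of_mem_invtSubmodule hb hχ (hinv i)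
    obtain ⟨f, hf⟩ := b.exists_eq_preimage_of_isInternal_span_image ((funext hW : W = _) ▸ hint)
    refine ⟨f, fun i => ?_, funext fun i => ?_⟩
    · rw [← hf, ← b.finrank_span_image, ← hW, hdim]
    · exact (hf i ▸ hW i).symm
  · rintro ⟨f, hf, rfl⟩
    exact ⟨fun i => span_image_mem_invtSubmodule hb _, b.isInternal_span_image_preimage f,
      fun i => (b.finrank_span_image _).trans (hf i)⟩

end Representation

theorem card_invariant_flags_eq_multinomial_general
    {K : Type*} [Field K] {G : Type*} [Group G]
    {V : Type*} [AddCommGroup V] [Module K V]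
    (n : ℕ)
    (ρ : Representation K G V)
    (L : Fin n → Submodule K V) (hinternal : DirectSum.IsInternal L)
    (hdim : ∀ k, Module.finrank K (L k) = 1)
    (χ : Fin n → G → K)
    (hχ : ∀ (k : Fin n) (g : G), ∀ v ∈ L k, ρ g v = χ k g • v)
    (hdist : Function.Injective χ)
    (r : ℕ) (nf : Fin r → ℕ)
    (hsum : ∑ i, nf i = n) :
    {W : Fin r → Submodule K V |
        (∀ (i : Fin r) (g : G), ∀ w ∈ W i, ρ g w ∈ W i) ∧
        DirectSum.IsInternal W ∧
        ∀ i, Module.finrank K (W i) = nf i}.Finite ∧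
    {W : Fin r → Submodule K V |
        (∀ (i : Fin r) (g : G), ∀ w ∈ W i, ρ g w ∈ W i) ∧
        DirectSum.IsInternal W ∧
        ∀ i, Module.finrank K (W i) = nf i}.ncard
      = Nat.multinomial Finset.univ nf := by
  obtain ⟨b, hbL⟩ := hinternal.exists_basis_mem_of_finrank_eq_one hdim
  have hinv (U : Submodule K V) : (∀ g, ∀ w ∈ U, ρ g w ∈ U) ↔ U ∈ ρ.invtSubmodule := by
    simp only [ρ.mem_invtSubmodule, Module.End.mem_invtSubmodule_iff_forall_mem_of_mem]
  simp only [hinv, ρ.setOf_isInternal_invtSubmodule_eq_image (fun k g => hχ k g _ (hbL k)) hdist]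
  refine ⟨(Set.toFinite _).image _, ?_⟩
  rw [Set.ncard_image_of_injective _ b.injective_span_image_preimage,
    ncard_setOf_ncard_preimage_eq nf (by simp [hsum])]

/-- Counting invariant flags in a multiplicity-free module: if `V = ⊕ₖ L k` is an
internal direct sum of `n` lines on which `G` acts by pairwise distinct characters,
then the set of `r`-tuples of `G`-invariant subspaces forming an internal direct sum
decomposition of `V` with prescribed dimensions `n 1, …, n r` is finite of
cardinality the multinomial coefficient `n! / (n 1! ⋯ n r!)`. -/
theorem card_invariant_flags_eq_multinomial
    {K : Type*} [Field K] {G : Type*} [Group G]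
    {V : Type*} [AddCommGroup V] [Module K V] [FiniteDimensional K V]
    (n : ℕ) (hdimV : Module.finrank K V = n)
    (ρ : Representation K G V)
    (L : Fin n → Submodule K V) (hinternal : DirectSum.IsInternal L)
    (hdim : ∀ k, Module.finrank K (L k) = 1)
    (χ : Fin n → G → K)
    (hχ : ∀ (k : Fin n) (g : G), ∀ v ∈ L k, ρ g v = χ k g • v)
    (hdist : Function.Injective χ)
    (r : ℕ) (hr : 1 ≤ r) (nf : Fin r → ℕ) (hpos : ∀ i, 0 < nf i)
    (hsum : ∑ i, nf i = n) :
    {W : Fin r → Submodule K V |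
        (∀ (i : Fin r) (g : G), ∀ w ∈ W i, ρ g w ∈ W i) ∧
        DirectSum.IsInternal W ∧
        ∀ i, Module.finrank K (W i) = nf i}.Finite ∧
    {W : Fin r → Submodule K V |
        (∀ (i : Fin r) (g : G), ∀ w ∈ W i, ρ g w ∈ W i) ∧
        DirectSum.IsInternal W ∧
        ∀ i, Module.finrank K (W i) = nf i}.ncard
      = Nat.multinomial Finset.univ nf :=
  card_invariant_flags_eq_multinomial_general n ρ L hinternal hdim χ hχ hdist r nf hsum
end

section
/- Let q ≥ 1, let γ be a nonempty finite subset of Fin q, and let S be the collection of all finite subsets of Fin q other than the empty set and γ (so S has cardinality 2^q - 2). Let r ≥ 1 and n_1,…,n_r be positive integers summing to 2^q - 2 with n_1 odd. Consider ordered partitions A = (A_1,…,A_r) of S into pairwise disjoint blocks with |A_i| = n_i whose union is S, and for such an A define the multiset T(A) over the finite subsets of Fin q by T(A) = the multiset of symmetric differences α Δ β over all pairs (α, β) with α ∈ A_i, β ∈ A_j and i < j (counted with multiplicity). Then the map Φ sending A = (A_1,…,A_r) to (A_1^γ,…,A_r^γ), where A_i^γ is the image of A_i under α ↦ α Δ γ,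 is a well-defined involution on the set of such ordered partitions, Φ(A) ≠ A for every such A, and T(Φ(A)) = T(A). Consequently, for every multiset m, the number of ordered partitions A with T(A) = m is even. -/
private lemma symmDiff_cancel_aux {α : Type*} [GeneralizedBooleanAlgebra α] (a b c : α) :
    symmDiff (symmDiff a c) (symmDiff b c) = symmDiff a b := by
  rw [symmDiff_assoc, symmDiff_comm b c, symmDiff_symmDiff_cancel_left]

private lemma even_card_of_invol {β : Type*} (s : Finset β) (g : β → β)
    (hmem : ∀ a ∈ s, g a ∈ s) (hinv : ∀ a ∈ s, g (g a) = a) (hne : ∀ a ∈ s, g a ≠ a) :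
    Even s.card := by
  classical
  have h : ∑ _x ∈ s, (1 : ZMod 2) = 0 := by
    refine Finset.sum_involution (fun a _ => g a) (fun a ha => ?_) (fun a ha _ => hne a ha)
      (fun a ha => hmem a ha) (fun a ha => hinv a ha)
    decide
  rw [Finset.sum_const, nsmul_eq_mul, mul_one] at h
  obtain ⟨k, hk⟩ := (ZMod.natCast_eq_zero_iff _ 2).mp h
  exact ⟨k, by omega⟩

/-- Combinatorial core of Example 4.1(iii): with `S` the collection of all subsets of
`Fin q` other than `∅` and a fixed nonempty `γ`, and `n 1` odd, the map
`Φ : (A 1, …, A r) ↦ (A 1 Δ γ, …, A r Δ γ)` (blockwise symmetric difference with `γ`)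
is a fixed-point-free involution on ordered partitions of `S` with block sizes
`n 1, …, n r` preserving the multiset `T(A)` of symmetric differences `α Δ β` over
pairs `α ∈ A i`, `β ∈ A j`, `i < j`; consequently, for every multiset `m` the
number of ordered partitions `A` with `T(A) = m` is even. -/
theorem flag_partition_involution_even
    (q : ℕ) (hq : 1 ≤ q) (γ : Finset (Fin q)) (hγ : γ.Nonempty)
    (S : Finset (Finset (Fin q))) (hS : S = Finset.univ \ {∅, γ})
    (r : ℕ) (hr : 1 ≤ r) (n : Fin r → ℕ) (hpos : ∀ i, 0 < n i)
    (hsum : ∑ i, n i = 2 ^ q - 2) (hodd : Odd (n ⟨0, hr⟩))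
    (isPart : (Fin r → Finset (Finset (Fin q))) → Prop)
    (hPart : ∀ A, isPart A ↔
      ((∀ i j, i ≠ j → Disjoint (A i) (A j)) ∧
       (∀ i, (A i).card = n i) ∧
       Finset.univ.biUnion A = S))
    (T : (Fin r → Finset (Finset (Fin q))) → Multiset (Finset (Fin q)))
    (hT : ∀ A, T A = ∑ p : Fin r × Fin r,
        if p.1 < p.2 then
          ((A p.1).val.bind fun α => (A p.2).val.map fun β => symmDiff α β)
        else 0)
    (Φ : (Fin r → Finset (Finset (Fin q))) → (Fin r → Finset (Finset (Fin q))))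
    (hΦ : ∀ A i, Φ A i = (A i).image (fun α => symmDiff α γ)) :
    (∀ A, isPart A → isPart (Φ A)) ∧
    (∀ A, isPart A → Φ (Φ A) = A) ∧
    (∀ A, isPart A → Φ A ≠ A) ∧
    (∀ A, isPart A → T (Φ A) = T A) ∧
    (∀ m : Multiset (Finset (Fin q)),
      Even {A : Fin r → Finset (Finset (Fin q)) | isPart A ∧ T A = m}.ncard) := by
  classical
  set f : Finset (Fin q) → Finset (Fin q) := fun α => symmDiff α γ with hf
  have hff : ∀ α, f (f α) = α := fun α => symmDiff_symmDiff_cancel_right γ α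
  have finj : Function.Injective f := symmDiff_left_injective γ
  have hγne : γ ≠ ∅ := hγ.ne_empty
  have hfS : ∀ α ∈ S, f α ∈ S := by
    intro α hα
    rw [hS] at hα ⊢
    simp only [Finset.mem_sdiff, Finset.mem_insert, Finset.mem_singleton, Finset.mem_univ,
      true_and, not_or] at hα ⊢
    have h0 : f ∅ = γ := by
      show symmDiff ∅ γ = γ
      rw [← Finset.bot_eq_empty, bot_symmDiff]
    refine ⟨fun h => hα.2 (symmDiff_eq_bot.mp h), fun h => hα.1 (finj (h.trans h0.symm))⟩
  have hfSimg : S.image f = S := by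
    apply Finset.eq_of_subset_of_card_le
    · intro x hx
      obtain ⟨a, ha, rfl⟩ := Finset.mem_image.mp hx
      exact hfS a ha
    · rw [Finset.card_image_of_injective _ finj]
  -- part 1
  have part1 : ∀ A, isPart A → isPart (Φ A) := by
    intro A hA
    rw [hPart] at hA ⊢
    obtain ⟨hdisj, hcard, hun⟩ := hA
    refine ⟨fun i j hij => ?_, fun i => ?_, ?_⟩
    · rw [hΦ, hΦ]
      exact (Finset.disjoint_image finj).mpr (hdisj i j hij)
    · rw [hΦ, Finset.card_image_of_injective _ finj, hcard]
    · have : (Finset.univ.biUnion A).image f = Finset.univ.biUnion (Φ A) := by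
        rw [Finset.biUnion_image]
        exact Finset.biUnion_congr rfl (fun i _ => (hΦ A i).symm)
      rw [← this, hun, hfSimg]
  -- part 2
  have part2 : ∀ A, Φ (Φ A) = A := by
    intro A
    funext i
    rw [hΦ, hΦ, Finset.image_image]
    have : (f ∘ f) = id := funext hff
    simp only [hf] at this
    rw [this, Finset.image_id]
  -- fixed-point-freeness of f
  have hfne : ∀ α, f α ≠ α := by
    intro α h
    exact hγne (symmDiff_eq_left.mp h)
  -- part 3
  have part3 : ∀ A, isPart A → Φ A ≠ A := by
    intro A hA heq
    rw [hPart] at hA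
    obtain ⟨-, hcard, -⟩ := hA
    set i0 : Fin r := ⟨0, hr⟩
    have himg : (A i0).image f = A i0 := by
      have := congrFun heq i0
      rw [hΦ] at this
      exact this
    have heven : Even (A i0).card := by
      refine even_card_of_invol (A i0) f (fun a ha => ?_) (fun a _ => hff a)
        (fun a _ => hfne a)
      rw [← himg]; exact Finset.mem_image_of_mem f ha
    rw [hcard] at heven
    exact (Nat.not_even_iff_odd.mpr hodd) heven
  -- part 4
  have part4 : ∀ A, T (Φ A) = T A := by
    intro A
    rw [hT, hT]
    refine Finset.sum_congr rfl (fun p _ => ?_)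
    by_cases h : p.1 < p.2
    · simp only [h, if_true]
      have h1 : (Φ A p.1).val = (A p.1).val.map f := by
        rw [hΦ]; exact Finset.image_val_of_injOn (finj.injOn)
      have h2 : (Φ A p.2).val = (A p.2).val.map f := by
        rw [hΦ]; exact Finset.image_val_of_injOn (finj.injOn)
      rw [h1, h2, Multiset.bind_map]
      refine Multiset.bind_congr (fun α _ => ?_)
      rw [Multiset.map_map]
      refine Multiset.map_congr rfl (fun β _ => ?_)
      exact symmDiff_cancel_aux α β γ
    · simp [h]
  -- part 5
  refine ⟨part1, fun A _ => part2 A, part3, fun A _ => part4 A, fun m => ?_⟩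
  have hsetfin : {A : Fin r → Finset (Finset (Fin q)) | isPart A ∧ T A = m} =
      ↑(Finset.univ.filter (fun A => isPart A ∧ T A = m)) := by
    ext A; simp
  rw [hsetfin, Set.ncard_coe_finset]
  refine even_card_of_invol _ Φ (fun A hA => ?_) (fun A _ => part2 A) (fun A hA => ?_)
  · simp only [Finset.mem_filter, Finset.mem_univ, true_and] at hA ⊢
    exact ⟨part1 A hA.1, (part4 A).trans hA.2⟩
  · simp only [Finset.mem_filter, Finset.mem_univ, true_and] at hA
    exact part3 A hA.1
end
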